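/- Let ρ = 1.861 and let ψ, φ ≥ 0. Then for any α with 0.5 ≤ α ≤ 1.26, we have 2ψ + φ + max(2, 1/α)·(ρ·ψ + α·ρ·φ) ≤ (2ρ + 2)·(ψ + φ), i.e., the bound is at most 5.722·(ψ + φ). -/

import Mathlib

/-! Since `α ≥ 1/2`, the factor `max 2 (1/α)` is just `2`. The routing terms then cancel exactly
against `(2ρ + 2) ψ`, and what remains is `(1 + 2ρα) φ ≤ (2ρ + 2) φ`, i.e. `α ≤ (2ρ + 1) / (2ρ)`. -/

lemma max_two_one_div_eq_two {α : ℝ} (hα : 1 / 2 ≤ α) : max 2 (1 / α) = 2 := by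
  refine max_eq_left ?_
  rw [div_le_iff₀ (by linarith)]
  linarith

lemma two_mul_add_add_max_mul_le {ρ ψ φ α : ℝ} (hφ : 0 ≤ φ) (hα₁ : 1 / 2 ≤ α)
    (hα₂ : 2 * ρ * α ≤ 2 * ρ + 1) :
    2 * ψ + φ + max 2 (1 / α) * (ρ * ψ + α * ρ * φ) ≤ (2 * ρ + 2) * (ψ + φ) := by
  rw [max_two_one_div_eq_two hα₁]
  linarith [mul_le_mul_of_nonneg_right hα₂ hφ]

theorem stmt_4_general (ψ φ α : ℝ) (hφ : 0 ≤ φ)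
    (hα1 : 0.5 ≤ α) (hα2 : α ≤ 1.26) :
    2 * ψ + φ + max 2 (1 / α) * ((1.861 : ℝ) * ψ + α * 1.861 * φ)
      ≤ (2 * 1.861 + 2) * (ψ + φ) :=
  two_mul_add_add_max_mul_le hφ (by linarith) (by linarith)

theorem stmt_4 (ψ φ α : ℝ) (hψ : 0 ≤ ψ) (hφ : 0 ≤ φ)
    (hα1 : 0.5 ≤ α) (hα2 : α ≤ 1.26) :
    2 * ψ + φ + max 2 (1 / α) * ((1.861 : ℝ) * ψ + α * 1.861 * φ)
      ≤ (2 * 1.861 + 2) * (ψ + φ) :=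
  stmt_4_general ψ φ α hφ hα1 hα2
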